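/- arXiv:math/9907002 — 3 statements merged into one kernel-verified Lean document; each statement's English description precedes it below -/
import Mathlib

section
/- Let Q ∈ ℝ[X,Y] be a polynomial that is irreducible when regarded as an element of ℂ[X,Y], and suppose its real zero set V_ℝ(Q) = {(x,y) ∈ ℝ² : Q(x,y) = 0} is infinite (equivalently, has dimension 1). Then V_ℝ(Q) is irreducible as a real algebraic variety: for all P₁, P₂ ∈ ℝ[X,Y] with V_ℝ(Q) = V_ℝ(P₁) ∪ V_ℝ(P₂), one has V_ℝ(Q) = V_ℝ(P₁) or V_ℝ(Q) = V_ℝ(P₂). -/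
/-!
If `Q` is irreducible over `ℂ` and does not divide a polynomial `P`, then `Q` and `P` have only
finitely many common zeros: by Gauss's lemma they are coprime over `ℂ(X)[Y]`, so their resultant
with respect to `Y` is a nonzero polynomial in `X` vanishing at every common zero, and symmetrically
in the other variable. Hence if `V_ℝ(Q) = V_ℝ(P₁) ∪ V_ℝ(P₂)` is infinite, `Q` divides `P₁ P₂` over
`ℂ`, so, being prime, it divides one of the factors, whose real zero set then contains `V_ℝ(Q)`.
-/

/-- The real zero set of a two-variable real polynomial, as a subset of `ℝ × ℝ`. -/
def realZeroSet (P : MvPolynomial (Fin 2) ℝ) : Set (ℝ × ℝ) :=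
  {p | MvPolynomial.eval ![p.1, p.2] P = 0}

open Polynomial
open scoped Polynomial.Bivariate

namespace Polynomial

variable {R : Type*} [CommRing R] [IsDomain R] [IsGCDMonoid R]

theorem isCoprime_map_fraction_map_of_irreducible_of_not_dvd (K : Type*) [Field K] [Algebra R K]
    [IsFractionRing R K] {q p : R[X]} (hq : Irreducible q) (hdeg : q.natDegree ≠ 0)
    (hqp : ¬ q ∣ p) : IsCoprime (q.map (algebraMap R K)) (p.map (algebraMap R K)) := by
  have hprim := hq.isPrimitive hdeg
  refine (EuclideanDomain.dvd_or_coprime _ _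
    (hprim.irreducible_iff_irreducible_map_fraction_map.mp hq)).resolve_left fun h => hqp ?_
  exact hprim.dvd_of_fraction_map_dvd_fraction_map h

theorem exists_C_eq_mul_add_mul_of_irreducible_of_not_dvd {q p : R[X]} (hq : Irreducible q)
    (hqp : ¬ q ∣ p) : ∃ r ≠ 0, ∃ a b : R[X], q * a + p * b = C r := by
  by_cases hdeg : q.natDegree = 0
  · obtain ⟨r, rfl⟩ := natDegree_eq_zero.mp hdeg
    exact ⟨r, fun h => hq.ne_zero (by rw [h, C_0]), 1, 0, by ring⟩
  have hinj := IsFractionRing.injective R (FractionRing R)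
  have hres : resultant q p ≠ 0 := by
    rw [← map_ne_zero_iff _ hinj, ← resultant_map_map,
      ← natDegree_map_eq_of_injective hinj q, ← natDegree_map_eq_of_injective hinj p]
    exact resultant_ne_zero _ _
      (isCoprime_map_fraction_map_of_irreducible_of_not_dvd _ hq hdeg hqp)
  obtain ⟨a, b, -, -, h⟩ := exists_mul_add_mul_eq_C_resultant q p le_rfl le_rfl (Or.inl hdeg)
  exact ⟨_, hres, a, b, h⟩

namespace Bivariate

theorem eval_equivMvPolynomial {S : Type*} [CommRing S] (x y : S) (p : S[X][Y]) :
    MvPolynomial.eval ![x, y] (equivMvPolynomial S p) = p.evalEval x y := by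
  induction p using Polynomial.induction_on' with
  | add p q hp hq => simp [hp, hq]
  | monomial n a =>
    induction a using Polynomial.induction_on' with
    | add a b ha hb => simp_all
    | monomial m c => simp [← C_mul_X_pow_eq_monomial, evalEval_C]

variable {K : Type*} [Field K]

theorem evalEval_swap (x y : K) (p : K[X][Y]) : (swap p).evalEval x y = p.evalEval y x := by
  simpa only [coe_aevalAeval_eq_evalEval] using aevalAeval_swap x y p

theorem exists_ne_zero_isRoot_of_evalEval_eq_zero {q p : K[X][Y]} (hq : Irreducible q)
    (hqp : ¬ q ∣ p) :
    ∃ d : K[X], d ≠ 0 ∧ ∀ x y, q.evalEval x y = 0 → p.evalEval x y = 0 → d.IsRoot x := by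
  obtain ⟨d, hd, a, b, h⟩ := exists_C_eq_mul_add_mul_of_irreducible_of_not_dvd hq hqp
  refine ⟨d, hd, fun x y hqxy hpxy => ?_⟩
  simpa [hqxy, hpxy, evalEval_C] using (congrArg (evalEval x y) h).symm

theorem finite_setOf_evalEval_eq_zero {q p : K[X][Y]} (hq : Irreducible q) (hqp : ¬ q ∣ p) :
    {z : K × K | q.evalEval z.1 z.2 = 0 ∧ p.evalEval z.1 z.2 = 0}.Finite := by
  obtain ⟨d₁, hd₁, hroot₁⟩ := exists_ne_zero_isRoot_of_evalEval_eq_zero hq hqp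
  obtain ⟨d₂, hd₂, hroot₂⟩ := exists_ne_zero_isRoot_of_evalEval_eq_zero (q := swap q) (p := swap p)
    ((MulEquiv.irreducible_iff swap.toMulEquiv).mpr hq) ((map_dvd_iff swap).not.mpr hqp)
  refine ((finite_setOfPred_isRoot hd₁).prod (finite_setOfPred_isRoot hd₂)).subset ?_
  rintro ⟨x, y⟩ ⟨hqxy, hpxy⟩
  exact ⟨hroot₁ x y hqxy hpxy, hroot₂ y x (by rwa [evalEval_swap]) (by rwa [evalEval_swap])⟩

end Bivariate

end Polynomial

namespace MvPolynomial

variable {K L : Type*} [Field K] [Field L] [Algebra K L]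

def planeZeroSet (P : MvPolynomial (Fin 2) K) : Set (K × K) :=
  {z | eval ![z.1, z.2] P = 0}

theorem planeZeroSet_mul (P₁ P₂ : MvPolynomial (Fin 2) K) :
    planeZeroSet (P₁ * P₂) = planeZeroSet P₁ ∪ planeZeroSet P₂ := by
  ext z
  simp [planeZeroSet]

theorem finite_planeZeroSet_inter_of_irreducible_of_not_dvd {Q P : MvPolynomial (Fin 2) K}
    (hQ : Irreducible Q) (hQP : ¬ Q ∣ P) : (planeZeroSet Q ∩ planeZeroSet P).Finite := by
  let e := (Bivariate.equivMvPolynomial K).symm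
  have hmem (F : MvPolynomial (Fin 2) K) (z : K × K) :
      z ∈ planeZeroSet F ↔ (e F).evalEval z.1 z.2 = 0 := by
    rw [← Bivariate.eval_equivMvPolynomial, AlgEquiv.apply_symm_apply]
    rfl
  have hfin : {z : K × K | (e Q).evalEval z.1 z.2 = 0 ∧ (e P).evalEval z.1 z.2 = 0}.Finite :=
    Bivariate.finite_setOf_evalEval_eq_zero
      ((MulEquiv.irreducible_iff e.toMulEquiv).mpr hQ) ((map_dvd_iff e).not.mpr hQP)
  simpa only [Set.inter_def, hmem] using hfin

theorem map_mem_planeZeroSet_map_iff (P : MvPolynomial (Fin 2) K) (z : K × K) :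
    Prod.map (algebraMap K L) (algebraMap K L) z ∈ planeZeroSet (map (algebraMap K L) P) ↔
      z ∈ planeZeroSet P := by
  have hv : ![algebraMap K L z.1, algebraMap K L z.2] = algebraMap K L ∘ ![z.1, z.2] := by
    ext i; fin_cases i <;> rfl
  simp only [planeZeroSet, Set.mem_ofPred_eq, Prod.map_fst, Prod.map_snd, eval_map, hv,
    ← eval₂_comp, map_eq_zero_iff _ (algebraMap K L).injective]

theorem map_dvd_map_of_infinite_of_planeZeroSet_subset {Q P : MvPolynomial (Fin 2) K}
    (hQ : Irreducible (map (algebraMap K L) Q)) (hinf : (planeZeroSet Q).Infinite)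
    (hQP : planeZeroSet Q ⊆ planeZeroSet P) : map (algebraMap K L) Q ∣ map (algebraMap K L) P := by
  by_contra hndvd
  have hinj : Function.Injective (Prod.map (algebraMap K L) (algebraMap K L)) :=
    (algebraMap K L).injective.prodMap (algebraMap K L).injective
  refine hinf (((finite_planeZeroSet_inter_of_irreducible_of_not_dvd hQ hndvd).preimage
    hinj.injOn).subset fun z hz => ?_)
  exact ⟨(map_mem_planeZeroSet_map_iff Q z).mpr hz, (map_mem_planeZeroSet_map_iff P z).mpr (hQP hz)⟩

theorem planeZeroSet_subset_of_map_dvd_map {Q P : MvPolynomial (Fin 2) K}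
    (h : map (algebraMap K L) Q ∣ map (algebraMap K L) P) : planeZeroSet Q ⊆ planeZeroSet P := by
  intro z hz
  rw [← map_mem_planeZeroSet_map_iff (L := L)] at hz ⊢
  exact zero_dvd_iff.mp (hz ▸ map_dvd (eval _) h)

end MvPolynomial

theorem real_zero_set_irreducible_of_complex_irreducible
    (Q : MvPolynomial (Fin 2) ℝ)
    (hirr : Irreducible (MvPolynomial.map (algebraMap ℝ ℂ) Q))
    (hinf : (realZeroSet Q).Infinite) :
    ∀ P₁ P₂ : MvPolynomial (Fin 2) ℝ,
      realZeroSet Q = realZeroSet P₁ ∪ realZeroSet P₂ →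
      realZeroSet Q = realZeroSet P₁ ∨ realZeroSet Q = realZeroSet P₂ := by
  intro P₁ P₂ hunion
  change MvPolynomial.planeZeroSet Q =
    MvPolynomial.planeZeroSet P₁ ∪ MvPolynomial.planeZeroSet P₂ at hunion
  have hdvd := MvPolynomial.map_dvd_map_of_infinite_of_planeZeroSet_subset hirr hinf
    (P := P₁ * P₂) (by rw [MvPolynomial.planeZeroSet_mul, hunion])
  rw [map_mul] at hdvd
  rcases (UniqueFactorizationMonoid.irreducible_iff_prime.mp hirr).dvd_or_dvd hdvd with h | h
  · exact .inl ((MvPolynomial.planeZeroSet_subset_of_map_dvd_map h).antisymm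
      (hunion ▸ Set.subset_union_left))
  · exact .inr ((MvPolynomial.planeZeroSet_subset_of_map_dvd_map h).antisymm
      (hunion ▸ Set.subset_union_right))
end

section
/- For every integer n ≥ 0, the real algebraic variety V_ℝ(Qₙ) = {(x,y) ∈ ℝ² : xⁿ − 1 − y² = 0} defined by the polynomial Qₙ(X,Y) = Xⁿ − 1 − Y² is irreducible: for all P₁, P₂ ∈ ℝ[X,Y] with V_ℝ(Qₙ) = V_ℝ(P₁) ∪ V_ℝ(P₂), one has V_ℝ(Qₙ) = V_ℝ(P₁) or V_ℝ(Qₙ) = V_ℝ(P₂). -/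
open Polynomial Polynomial.Bivariate

section Bivariate

variable {R : Type*} [CommRing R]

lemma evalEval_equivMvPolynomial_symm (P : MvPolynomial (Fin 2) R) (x y : R) :
    ((equivMvPolynomial R).symm P).evalEval x y = MvPolynomial.eval ![x, y] P := by
  induction P using MvPolynomial.induction_on with
  | C a => simp
  | add p q hp hq => simp [evalEval_add, hp, hq]
  | mul_X p i hp => fin_cases i <;> simp [evalEval_mul, evalEval_C, hp]

def sqCurve (f : R[X]) : Set (R × R) := {p | p.2 ^ 2 = f.eval p.1}

lemma exists_evalEval_eq_on_sqCurve [Nontrivial R] (f : R[X]) (p : R[X][Y]) :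
    ∃ a b : R[X], ∀ q ∈ sqCurve f, p.evalEval q.1 q.2 = a.eval q.1 + b.eval q.1 * q.2 := by
  have hmonic : (Y ^ 2 - C f).Monic := monic_X_pow_sub_C f two_ne_zero
  obtain ⟨r, s, hdeg, hp⟩ : ∃ r s : R[X][Y], r.degree ≤ 1 ∧ r + (Y ^ 2 - C f) * s = p := by
    have hlt := degree_modByMonic_lt p hmonic
    rw [degree_X_pow_sub_C two_pos] at hlt
    exact ⟨_, _, Order.le_of_lt_succ hlt, modByMonic_add_div p (Y ^ 2 - C f)⟩
  rw [eq_X_add_C_of_degree_le_one hdeg] at hp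
  refine ⟨r.coeff 0, r.coeff 1, fun q hq => ?_⟩
  have hvanish : (Y ^ 2 - C f).evalEval q.1 q.2 = 0 := by
    simp [evalEval_sub, evalEval_pow, evalEval_X, evalEval_C, hq.symm]
  rw [← hp]
  simp only [evalEval_add, evalEval_mul, evalEval_C, evalEval_X, hvanish, zero_mul, add_zero]
  ring

lemma finite_sqCurve_inter_fst_preimage [IsDomain R] (f : R[X]) (x : R) :
    (sqCurve f ∩ Prod.fst ⁻¹' {x}).Finite := by
  have : sqCurve f ∩ Prod.fst ⁻¹' {x} ⊆ {x} ×ˢ {y | IsRoot (X ^ 2 - C (f.eval x)) y} := by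
    rintro ⟨x', y⟩ ⟨hq, rfl⟩
    simp_all [sqCurve]
  exact ((Set.finite_singleton x).prod
    (finite_setOfPred_isRoot (X_pow_sub_C_ne_zero two_pos _))).subset this

lemma infinite_fst_image_of_subset_sqCurve [IsDomain R] {f : R[X]} {S : Set (R × R)}
    (hS : S.Infinite) (hSf : S ⊆ sqCurve f) : (Prod.fst '' S).Infinite := by
  refine fun hfin => hS ((hfin.biUnion fun x _ => finite_sqCurve_inter_fst_preimage f x).subset ?_)
  intro q hq
  simp only [Set.mem_iUnion]
  exact ⟨q.1, ⟨q, hq, rfl⟩, hSf hq, rfl⟩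

lemma sq_eq_sq_mul_of_infinite [IsDomain R] {f a b : R[X]} {S : Set (R × R)}
    (hS : S.Infinite) (hSf : S ⊆ sqCurve f) (hab : ∀ q ∈ S, a.eval q.1 + b.eval q.1 * q.2 = 0) :
    a ^ 2 = b ^ 2 * f := by
  rw [← sub_eq_zero]
  refine eq_zero_of_infinite_isRoot _ ((infinite_fst_image_of_subset_sqCurve hS hSf).mono ?_)
  rintro _ ⟨q, hq, rfl⟩
  have hq' : q.2 ^ 2 = f.eval q.1 := hSf hq
  simp only [Set.mem_ofPred_eq, IsRoot.def, eval_sub, eval_mul, eval_pow]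
  linear_combination (a.eval q.1 - b.eval q.1 * q.2) * hab q hq + b.eval q.1 ^ 2 * hq'

lemma eq_zero_of_sq_eq_sq_mul [IsDomain R] {f a b : R[X]} {c : R}
    (hf : Odd (f.rootMultiplicity c)) (h : a ^ 2 = b ^ 2 * f) : b = 0 := by
  have hf0 : f ≠ 0 := by rintro rfl; simp at hf
  by_contra hb
  have hbf : b ^ 2 * f ≠ 0 := mul_ne_zero (pow_ne_zero 2 hb) hf0
  have ha : a ^ 2 ≠ 0 := h ▸ hbf
  have := congrArg (rootMultiplicity c) h
  rw [rootMultiplicity_mul hbf, pow_two, pow_two, rootMultiplicity_mul (pow_two a ▸ ha),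
    rootMultiplicity_mul (mul_ne_zero hb hb)] at this
  obtain ⟨k, hk⟩ := hf
  omega

lemma rootMultiplicity_one_X_pow_sub_one {K : Type*} [Field K] {n : ℕ} (hn : (n : K) ≠ 0) :
    (X ^ n - 1 : K[X]).rootMultiplicity 1 = 1 := by
  have hsep := X_pow_sub_one_separable_iff.2 hn
  refine (rootMultiplicity_le_one_of_separable hsep 1).antisymm ?_
  exact (rootMultiplicity_pos hsep.ne_zero).2 (by simp)

theorem eval_eq_zero_on_sqCurve_of_infinite [IsDomain R] {f : R[X]}
    (hf : f = 0 ∨ ∃ c, Odd (f.rootMultiplicity c)) {P : MvPolynomial (Fin 2) R}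
    {S : Set (R × R)} (hS : S.Infinite) (hSf : S ⊆ sqCurve f)
    (hP : ∀ q ∈ S, MvPolynomial.eval ![q.1, q.2] P = 0) :
    ∀ q ∈ sqCurve f, MvPolynomial.eval ![q.1, q.2] P = 0 := by
  obtain ⟨a, b, hab⟩ := exists_evalEval_eq_on_sqCurve f ((equivMvPolynomial R).symm P)
  simp only [evalEval_equivMvPolynomial_symm] at hab
  have hsq : a ^ 2 = b ^ 2 * f :=
    sq_eq_sq_mul_of_infinite hS hSf fun q hq => (hab q (hSf hq)).symm.trans (hP q hq)
  intro q hq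
  rw [hab q hq]
  rcases hf with rfl | ⟨c, hc⟩
  · have ha : a = 0 := by simpa using hsq
    have hy : q.2 = 0 := by simpa [sqCurve] using hq
    simp [ha, hy]
  · have hb := eq_zero_of_sq_eq_sq_mul hc hsq
    have ha : a = 0 := by simpa [hb] using hsq
    simp [ha, hb]

end Bivariate

lemma infinite_sqCurve {f : ℝ[X]} (hf : {x | 0 ≤ f.eval x}.Infinite) : (sqCurve f).Infinite := by
  refine (Set.Infinite.image (f := fun x => (x, √(f.eval x)))
    (fun x _ y _ h => congrArg Prod.fst h) hf).mono ?_
  rintro _ ⟨x, hx, rfl⟩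
  exact Real.sq_sqrt hx

lemma Set.eq_or_eq_of_eq_union_of_infinite {α ι : Type*} {V : Set α} {Z : ι → Set α}
    (hV : V.Infinite) (hZ : ∀ i, (Z i ∩ V).Infinite → V ⊆ Z i) {i j : ι} (h : V = Z i ∪ Z j) :
    V = Z i ∨ V = Z j := by
  have hcover : V = Z i ∩ V ∪ Z j ∩ V := by
    rw [← Set.union_inter_distrib_right, ← h, Set.inter_self]
  rw [hcover, Set.infinite_union] at hV
  refine hV.imp (fun hi => ?_) (fun hj => ?_)
  · exact (hZ i hi).antisymm (h ▸ Set.subset_union_left)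
  · exact (hZ j hj).antisymm (h ▸ Set.subset_union_right)

theorem zero_set_Qn_irreducible (n : ℕ) :
    ∀ P₁ P₂ : MvPolynomial (Fin 2) ℝ,
      {p : ℝ × ℝ | p.1 ^ n - 1 - p.2 ^ 2 = 0} = realZeroSet P₁ ∪ realZeroSet P₂ →
      {p : ℝ × ℝ | p.1 ^ n - 1 - p.2 ^ 2 = 0} = realZeroSet P₁ ∨
        {p : ℝ × ℝ | p.1 ^ n - 1 - p.2 ^ 2 = 0} = realZeroSet P₂ := by
  intro P₁ P₂ hV
  have hcurve : {p : ℝ × ℝ | p.1 ^ n - 1 - p.2 ^ 2 = 0} = sqCurve (X ^ n - 1) := by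
    ext p
    simp only [sqCurve, Set.mem_ofPred_eq, eval_sub, eval_pow, eval_X, eval_one]
    constructor <;> intro h <;> linarith
  have hf : (X ^ n - 1 : ℝ[X]) = 0 ∨ ∃ c, Odd ((X ^ n - 1 : ℝ[X]).rootMultiplicity c) := by
    rcases Nat.eq_zero_or_pos n with rfl | hn
    · simp
    · exact .inr ⟨1, by simp [rootMultiplicity_one_X_pow_sub_one (Nat.cast_ne_zero.2 hn.ne')]⟩
  have hnonneg : Set.Ici 1 ⊆ {x : ℝ | 0 ≤ (X ^ n - 1 : ℝ[X]).eval x} := fun x hx => by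
    simpa using one_le_pow₀ (M₀ := ℝ) hx
  rw [hcurve] at hV ⊢
  refine Set.eq_or_eq_of_eq_union_of_infinite (Z := realZeroSet)
    (infinite_sqCurve ((Set.Ici_infinite 1).mono hnonneg)) (fun P hP => ?_) hV
  exact eval_eq_zero_on_sqCurve_of_infinite hf hP Set.inter_subset_right fun q hq => hq.1
end

section
/- For every integer n ≥ 1, the real algebraic variety Vₙ = {(x,y) ∈ ℝ² : x^{2n} − (1+y²)² = 0} is irreducible if and only if n is even. Here irreducibility means: for all P₁, P₂ ∈ ℝ[X,Y] with Vₙ = V_ℝ(P₁) ∪ V_ℝ(P₂), one has Vₙ = V_ℝ(P₁) or Vₙ = V_ℝ(P₂). -/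
/-!
For odd `n`, `x^{2n} - (1 + y²)²` factors as `(xⁿ - 1 - y²)(xⁿ + 1 + y²)` and each factor misses
one of the points `(±1, 0)` of `Vₙ`. For even `n`, `Vₙ` is the curve `y² = xⁿ - 1`, on which every
polynomial restricts to some `a(x) + y b(x)`. If `Vₙ = Z(P₁) ∪ Z(P₂)`, the product of the norms
`aᵢ² - (xⁿ - 1) bᵢ²` vanishes wherever `xⁿ ≥ 1`, hence identically; and a vanishing norm forces
`aᵢ = bᵢ = 0`, because `xⁿ - 1 < 0` on `(0, 1)`, so that `Pᵢ` vanishes on all of `Vₙ`.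
-/

open Polynomial

def IsIrreducibleRealVariety (V : Set (ℝ × ℝ)) : Prop :=
  ∀ P₁ P₂ : MvPolynomial (Fin 2) ℝ, V = realZeroSet P₁ ∪ realZeroSet P₂ →
    V = realZeroSet P₁ ∨ V = realZeroSet P₂

lemma exists_eval_eq_add_mul_of_sq_eq {R : Type*} [CommRing R] (g : R[X])
    (P : MvPolynomial (Fin 2) R) :
    ∃ a b : R[X], ∀ x y : R, y ^ 2 = g.eval x →
      MvPolynomial.eval ![x, y] P = a.eval x + y * b.eval x := by
  induction P using MvPolynomial.induction_on with
  | C r => exact ⟨C r, 0, fun x y _ => by simp⟩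
  | add p q hp hq =>
    obtain ⟨a, b, hab⟩ := hp
    obtain ⟨a', b', hab'⟩ := hq
    refine ⟨a + a', b + b', fun x y hy => ?_⟩
    simp only [map_add, hab x y hy, hab' x y hy, eval_add]
    ring
  | mul_X p i hp =>
    obtain ⟨a, b, hab⟩ := hp
    fin_cases i
    · exact ⟨X * a, X * b, fun x y hy => by simp [hab x y hy]; ring⟩
    · exact ⟨g * b, a, fun x y hy => by simp [hab x y hy]; linear_combination b.eval x * hy⟩

lemma eq_zero_of_sq_eq_mul_sq {R : Type*} [CommRing R] [LinearOrder R]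
    [IsStrictOrderedRing R] {f a b : R[X]} (hf : {x | f.eval x < 0}.Infinite)
    (h : a ^ 2 = f * b ^ 2) : a = 0 ∧ b = 0 := by
  have hroots : ∀ x, f.eval x < 0 → a.eval x = 0 ∧ b.eval x = 0 := by
    intro x hx
    have hx' : a.eval x ^ 2 = f.eval x * b.eval x ^ 2 := by simpa using congrArg (eval x) h
    have hb : b.eval x ^ 2 = 0 := by nlinarith [sq_nonneg (a.eval x), sq_nonneg (b.eval x)]
    refine ⟨pow_eq_zero_iff two_ne_zero |>.mp ?_, pow_eq_zero_iff two_ne_zero |>.mp hb⟩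
    rw [hx', hb, mul_zero]
  exact ⟨eq_zero_of_infinite_isRoot _ (hf.mono fun x hx => (hroots x hx).1),
    eq_zero_of_infinite_isRoot _ (hf.mono fun x hx => (hroots x hx).2)⟩

lemma subset_realZeroSet_of_sq_eq_mul_sq {g a b : ℝ[X]} {P : MvPolynomial (Fin 2) ℝ}
    (hP : ∀ x y : ℝ, y ^ 2 = g.eval x → MvPolynomial.eval ![x, y] P = a.eval x + y * b.eval x)
    (hneg : {x | g.eval x < 0}.Infinite) (hab : a ^ 2 = g * b ^ 2) :
    {p : ℝ × ℝ | p.2 ^ 2 = g.eval p.1} ⊆ realZeroSet P := by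
  obtain ⟨rfl, rfl⟩ := eq_zero_of_sq_eq_mul_sq hneg hab
  intro p hp
  simp [realZeroSet, hP p.1 p.2 hp]

theorem isIrreducibleRealVariety_sq_eq {g : ℝ[X]} (hpos : {x | 0 ≤ g.eval x}.Infinite)
    (hneg : {x | g.eval x < 0}.Infinite) :
    IsIrreducibleRealVariety {p : ℝ × ℝ | p.2 ^ 2 = g.eval p.1} := by
  intro P₁ P₂ hU
  obtain ⟨a₁, b₁, h₁⟩ := exists_eval_eq_add_mul_of_sq_eq g P₁
  obtain ⟨a₂, b₂, h₂⟩ := exists_eval_eq_add_mul_of_sq_eq g P₂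
  -- At `x` with `g x = s² ≥ 0`, the point `(x, s)` is a zero of `P₁` or of `P₂`, and
  -- `(aᵢ² - g bᵢ²)(x)` is `Pᵢ(x, s)` times its conjugate `aᵢ(x) - s bᵢ(x)`.
  have hnorm : (a₁ ^ 2 - g * b₁ ^ 2) * (a₂ ^ 2 - g * b₂ ^ 2) = 0 := by
    refine eq_zero_of_infinite_isRoot _ (hpos.mono fun x hx => ?_)
    set s := √(g.eval x)
    have hs : s ^ 2 = g.eval x := Real.sq_sqrt hx
    have hzero : (a₁.eval x + s * b₁.eval x) * (a₂.eval x + s * b₂.eval x) = 0 := by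
      have hmem : (x, s) ∈ realZeroSet P₁ ∪ realZeroSet P₂ := hU ▸ hs
      rw [← h₁ x s hs, ← h₂ x s hs]
      exact mul_eq_zero.mpr hmem
    simp only [Set.mem_ofPred_eq, IsRoot, eval_mul, eval_sub, eval_pow]
    linear_combination (a₁.eval x - s * b₁.eval x) * (a₂.eval x - s * b₂.eval x) * hzero
      + (b₁.eval x ^ 2 * a₂.eval x ^ 2 + a₁.eval x ^ 2 * b₂.eval x ^ 2
        - (g.eval x + s ^ 2) * b₁.eval x ^ 2 * b₂.eval x ^ 2) * hs
  rcases mul_eq_zero.mp hnorm with hN | hN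
  · exact .inl <| (subset_realZeroSet_of_sq_eq_mul_sq h₁ hneg (sub_eq_zero.mp hN)).antisymm
      (hU ▸ Set.subset_union_left)
  · exact .inr <| (subset_realZeroSet_of_sq_eq_mul_sq h₂ hneg (sub_eq_zero.mp hN)).antisymm
      (hU ▸ Set.subset_union_right)

def V (n : ℕ) : Set (ℝ × ℝ) :=
  {p | p.1 ^ (2 * n) - (1 + p.2 ^ 2) ^ 2 = 0}

lemma V_eq_union (n : ℕ) :
    V n = realZeroSet (MvPolynomial.X 0 ^ n - (1 + MvPolynomial.X 1 ^ 2)) ∪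
      realZeroSet (MvPolynomial.X 0 ^ n + (1 + MvPolynomial.X 1 ^ 2)) := by
  ext ⟨x, y⟩
  simp only [V, realZeroSet, Set.mem_union, Set.mem_ofPred_eq, map_add, map_sub, map_pow,
    map_one, MvPolynomial.eval_X, Matrix.cons_val_zero, Matrix.cons_val_one, ← mul_eq_zero]
  ring_nf

lemma not_isIrreducibleRealVariety_V_of_odd {n : ℕ} (hn : Odd n) :
    ¬ IsIrreducibleRealVariety (V n) := by
  intro h
  rcases h _ _ (V_eq_union n) with hV | hV
  · have : ((-1 : ℝ), (0 : ℝ)) ∈ V n := by simp [V, pow_mul]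
    rw [hV] at this
    norm_num [realZeroSet, hn.neg_one_pow] at this
  · have : ((1 : ℝ), (0 : ℝ)) ∈ V n := by simp [V]
    rw [hV] at this
    norm_num [realZeroSet] at this

lemma V_eq_of_even {n : ℕ} (hn : Even n) :
    V n = {p : ℝ × ℝ | p.2 ^ 2 = (X ^ n - 1 : ℝ[X]).eval p.1} := by
  ext ⟨x, y⟩
  have hx : 0 ≤ x ^ n := hn.pow_nonneg x
  simp only [V, Set.mem_ofPred_eq, eval_sub, eval_pow, eval_X, eval_one, pow_mul']
  constructor
  · intro h
    nlinarith [sq_nonneg y]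
  · intro h
    rw [show x ^ n = 1 + y ^ 2 by linarith]
    ring

theorem Vn_irreducible_iff_even (n : ℕ) (hn : 1 ≤ n) :
    (∀ P₁ P₂ : MvPolynomial (Fin 2) ℝ,
        {p : ℝ × ℝ | p.1 ^ (2 * n) - (1 + p.2 ^ 2) ^ 2 = 0} =
            realZeroSet P₁ ∪ realZeroSet P₂ →
        {p : ℝ × ℝ | p.1 ^ (2 * n) - (1 + p.2 ^ 2) ^ 2 = 0} = realZeroSet P₁ ∨
          {p : ℝ × ℝ | p.1 ^ (2 * n) - (1 + p.2 ^ 2) ^ 2 = 0} = realZeroSet P₂) ↔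
      Even n := by
  change IsIrreducibleRealVariety (V n) ↔ Even n
  refine ⟨fun h => Nat.not_odd_iff_even.mp (not_isIrreducibleRealVariety_V_of_odd · h),
    fun heven => ?_⟩
  rw [V_eq_of_even heven]
  refine isIrreducibleRealVariety_sq_eq ((Set.Ici_infinite 1).mono fun x hx => ?_)
    ((Set.Ioo_infinite zero_lt_one).mono fun x hx => ?_)
  · simpa using one_le_pow₀ (M₀ := ℝ) hx
  · simpa using pow_lt_one₀ hx.1.le hx.2 (by omega)
end
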